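/- The class of compact ρ,h-cone-convex sets is closed under Hausdorff convergence: if S_n are compact ρ,h-cone-convex sets in ℝ^d and S is a nonempty compact set with d_H(S_n,S) → 0, then S is ρ,h-cone-convex. -/

import Mathlib

open MeasureTheory Metric Set Filter

noncomputable section

/-- The open finite cone with vertex `x`, axis `ξ`, opening angle `ρ` and height `h`. -/
def fcone (d : ℕ) (ρ h : ℝ) (x ξ : EuclideanSpace ℝ (Fin d)) :
    Set (EuclideanSpace ℝ (Fin d)) :=
  {z | z ≠ x ∧ (inner ℝ ξ (‖z - x‖⁻¹ • (z - x)) : ℝ) > Real.cos (ρ / 2)} ∩ Metric.ball x h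

/-- `S` is `ρ,h`-cone-convex. -/
def ConeConvex (d : ℕ) (ρ h : ℝ) (S : Set (EuclideanSpace ℝ (Fin d))) : Prop :=
  ∀ x ∈ frontier S, ∃ ξ : EuclideanSpace ℝ (Fin d), ‖ξ‖ = 1 ∧ fcone d ρ h x ξ ⊆ Sᶜ

/-- The `ρ,h`-cone-convex hull by complement. -/
def cccHull (d : ℕ) (ρ h : ℝ) (S : Set (EuclideanSpace ℝ (Fin d))) :
    Set (EuclideanSpace ℝ (Fin d)) :=
  ⋂₀ {A | ∃ y ξ : EuclideanSpace ℝ (Fin d),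
      ‖ξ‖ = 1 ∧ fcone d ρ h y ξ ∩ S = ∅ ∧ A = (fcone d ρ h y ξ)ᶜ}

/-- The `ρ,h`-cone-convex hull: intersection of all compact `ρ,h`-cone-convex supersets. -/
def ccHull (d : ℕ) (ρ h : ℝ) (S : Set (EuclideanSpace ℝ (Fin d))) :
    Set (EuclideanSpace ℝ (Fin d)) :=
  ⋂₀ {B | S ⊆ B ∧ IsCompact B ∧ B.Nonempty ∧ ConeConvex d ρ h B}

/-!
Near a frontier point `x` of `S`, every `Sn n` with `n` large has a frontier point `yₙ`, and
along a subsequence the unit axes of the empty cones at the `yₙ` converge to some `ξ`. Whether a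
point lies in a cone is an open condition on (vertex, axis, point), so a point of `S` in the cone
at `x` with axis `ξ` would be approximated by points of `Sn n` lying in the empty cones at `yₙ`.
-/

theorem IsPreconnected.inter_frontier_nonempty {X : Type*} [TopologicalSpace X] {t s : Set X}
    (ht : IsPreconnected t) (hts : (t ∩ s).Nonempty) (hts' : (t \ s).Nonempty) :
    (t ∩ frontier s).Nonempty := by
  by_contra hempty
  have hsub : t ⊆ interior s ∪ (closure s)ᶜ := fun w hw => by
    by_contra hw'
    simp only [mem_union, mem_compl_iff, not_or, not_not] at hw'
    exact hempty ⟨w, hw, hw'.2, hw'.1⟩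
  rcases ht.subset_or_subset isOpen_interior isClosed_closure.isOpen_compl
      (disjoint_compl_right.mono_left interior_subset_closure) hsub with hint | hext
  · obtain ⟨q, hqt, hqs⟩ := hts'
    exact hqs (interior_subset (hint hqt))
  · obtain ⟨p, hpt, hps⟩ := hts
    exact hext hpt (subset_closure hps)

/-- The segment from a point of `T i` near `x` to a point of `Sᶜ` near `x` lying farther than
`hausdorffDist (T i) S` from `S` crosses `frontier (T i)`. -/
theorem eventually_exists_mem_frontier_dist_lt {E ι : Type*} [NormedAddCommGroup E]
    [NormedSpace ℝ E] {l : Filter ι} {T : ι → Set E} {S : Set E} (hS : IsClosed S)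
    (hfin : ∀ i, hausdorffEDist (T i) S ≠ ⊤)
    (hlim : Tendsto (fun i => hausdorffDist (T i) S) l (nhds 0)) {x : E} (hx : x ∈ frontier S)
    {δ : ℝ} (hδ : 0 < δ) : ∀ᶠ i in l, ∃ y ∈ frontier (T i), dist y x < δ := by
  have hxS : x ∈ S := hS.frontier_subset hx
  obtain ⟨q, hqS, hxq⟩ := mem_closure_iff.1
    (frontier_subset_closure (frontier_compl S ▸ hx : x ∈ frontier Sᶜ)) δ hδ
  have hq : 0 < infDist q S := (hS.notMem_iff_infDist_pos ⟨x, hxS⟩).1 hqS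
  filter_upwards [hlim.eventually (eventually_lt_nhds (lt_min hδ hq))] with i hi
  obtain ⟨p, hpT, hpx⟩ :=
    exists_dist_lt_of_hausdorffDist_lt' hxS (hi.trans_le (min_le_left _ _)) (hfin i)
  have hqT : q ∉ T i := fun hqT =>
    (infDist_le_hausdorffDist_of_mem hqT (hfin i)).not_gt (hi.trans_le (min_le_right _ _))
  obtain ⟨y, hy, hyT⟩ := (convex_segment p q).isPreconnected.inter_frontier_nonempty
    ⟨p, left_mem_segment ℝ p q, hpT⟩ ⟨q, right_mem_segment ℝ p q, hqT⟩
  exact ⟨y, hyT, (convex_ball x δ).segment_subset hpx (mem_ball'.2 hxq) hy⟩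

theorem isOpen_setOf_mem_fcone (d : ℕ) (ρ h : ℝ) :
    IsOpen {p : EuclideanSpace ℝ (Fin d) × EuclideanSpace ℝ (Fin d) × EuclideanSpace ℝ (Fin d) |
      p.2.2 ∈ fcone d ρ h p.1 p.2.1} := by
  have hcont : ContinuousOn
      (fun p : EuclideanSpace ℝ (Fin d) × EuclideanSpace ℝ (Fin d) × EuclideanSpace ℝ (Fin d) =>
        (inner ℝ p.2.1 (‖p.2.2 - p.1‖⁻¹ • (p.2.2 - p.1)) : ℝ)) {p | p.2.2 ≠ p.1} := by
    intro p hp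
    have hne : ‖p.2.2 - p.1‖ ≠ 0 := norm_ne_zero_iff.2 (sub_ne_zero.2 hp)
    apply ContinuousAt.continuousWithinAt
    fun_prop (disch := exact hne)
  exact (hcont.isOpen_inter_preimage (isClosed_eq continuous_snd.snd continuous_fst).isOpen_compl
    isOpen_Ioi).inter (isOpen_lt (by fun_prop) continuous_const)

theorem stmt_9_general {d : ℕ} {ρ h : ℝ}
    (Sn : ℕ → Set (EuclideanSpace ℝ (Fin d)))
    (hSn : ∀ n, IsCompact (Sn n)) (hSne : ∀ n, (Sn n).Nonempty)
    (hcc : ∀ n, ConeConvex d ρ h (Sn n))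
    (S : Set (EuclideanSpace ℝ (Fin d))) (hS : IsCompact S) (hne : S.Nonempty)
    (hconv : Tendsto (fun n => Metric.hausdorffDist (Sn n) S) atTop (nhds 0)) :
    ConeConvex d ρ h S := by
  intro x hx
  have hfin : ∀ n, hausdorffEDist (Sn n) S ≠ ⊤ := fun n =>
    hausdorffEDist_ne_top_of_nonempty_of_bounded (hSne n) hne (hSn n).isBounded hS.isBounded
  have hnear : ∀ k : ℕ, ∃ n, hausdorffDist (Sn n) S < 1 / (k + 1) ∧
      ∃ y ∈ frontier (Sn n), dist y x < 1 / (k + 1) := fun k =>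
    ((hconv.eventually (eventually_lt_nhds Nat.one_div_pos_of_nat)).and
      (eventually_exists_mem_frontier_dist_lt hS.isClosed hfin hconv hx
        Nat.one_div_pos_of_nat)).exists
  choose n hnS y hyfr hyx using hnear
  choose ξ hξ hξS using fun k => hcc (n k) (y k) (hyfr k)
  obtain ⟨ξ₀, hξ₀, φ, hφ, hξlim⟩ :=
    (isCompact_sphere 0 1).tendsto_subseq fun k => mem_sphere_zero_iff_norm.2 (hξ k)
  refine ⟨ξ₀, mem_sphere_zero_iff_norm.1 hξ₀, fun z hz hzS => ?_⟩
  choose w hw hwz using fun j =>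
    exists_dist_lt_of_hausdorffDist_lt' hzS (hnS (φ j)) (hfin (n (φ j)))
  have hε : Tendsto (fun j => 1 / ((φ j : ℝ) + 1)) atTop (nhds 0) :=
    tendsto_one_div_add_atTop_nhds_zero_nat.comp hφ.tendsto_atTop
  have hylim : Tendsto (y ∘ φ) atTop (nhds x) := tendsto_iff_dist_tendsto_zero.2 <|
    squeeze_zero (fun _ => dist_nonneg) (fun j => (hyx (φ j)).le) hε
  have hwlim : Tendsto w atTop (nhds z) := tendsto_iff_dist_tendsto_zero.2 <|
    squeeze_zero (fun _ => dist_nonneg) (fun j => (hwz j).le) hε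
  obtain ⟨j, hj⟩ := ((hylim.prodMk_nhds (hξlim.prodMk_nhds hwlim)).eventually
    ((isOpen_setOf_mem_fcone d ρ h).mem_nhds hz)).exists
  exact hξS (φ j) hj (hw j)

theorem stmt_9 {d : ℕ} {ρ h : ℝ} (hρ : ρ ∈ Set.Ioc 0 Real.pi) (hh : 0 < h)
    (Sn : ℕ → Set (EuclideanSpace ℝ (Fin d)))
    (hSn : ∀ n, IsCompact (Sn n)) (hSne : ∀ n, (Sn n).Nonempty)
    (hcc : ∀ n, ConeConvex d ρ h (Sn n))
    (S : Set (EuclideanSpace ℝ (Fin d))) (hS : IsCompact S) (hne : S.Nonempty)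
    (hconv : Tendsto (fun n => Metric.hausdorffDist (Sn n) S) atTop (nhds 0)) :
    ConeConvex d ρ h S :=
  stmt_9_general Sn hSn hSne hcc S hS hne hconv
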